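/- arXiv:1803.10939 — 3 statements merged into one kernel-verified Lean document; each statement's English description precedes it below -/
import Mathlib

section
/- Let τ : Ω → [0, +∞] be a random variable with P[τ = 0] = 0, with default process H_t = 1_{{τ ≤ t}}, and let F = (F_t)_{t≥0} be a filtration. For every t ≥ 0 let C_t be the collection of all random variables ξ of the form ξ = ζ(1 − H_s), where ζ is bounded and F_t-measurable and 0 ≤ s ≤ t. Denoting by 𝒩 the family of P-null sets of 𝒜, one has σ(C_t) ∨ 𝒩 = G̃_t ∨ 𝒩 for every t ≥ 0, where G̃_t := F_t ∨ σ(H_s : 0 ≤ s ≤ t) and σ(C_t) is the smallest σ-algebra making every element of C_t measurable. -/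
open MeasureTheory Set
open scoped ENNReal NNReal

/-!
Each `ζ (1 - H_s)` is a product of `G̃_t`-measurable functions, so `σ(C_t) ≤ G̃_t`. Conversely,
`ζ = 1` gives `H_s = 1 - ξ` with `ξ ∈ C_t`, and for `A ∈ F_t` the element `1_A (1 - H_0)` of `C_t`
equals `1` exactly on `A \ {τ = 0}`; since `{τ = 0}` is null, `A` lies in `σ(C_t) ∨ 𝒩`.
-/

section

variable {Ω : Type*}

theorem measurableSet_sup_generateFrom_null_union {m m₀ : MeasurableSpace Ω} (P : Measure[m₀] Ω)
    {B C : Set Ω} (hB : MeasurableSet[m] B) (hC : P C = 0) :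
    MeasurableSet[m ⊔ MeasurableSpace.generateFrom {s | P s = 0}] (B ∪ C) :=
  MeasurableSet.union (le_sup_left (b := MeasurableSpace.generateFrom {s | P s = 0}) B hB)
    (le_sup_right (a := m) C (MeasurableSpace.measurableSet_generateFrom hC))

theorem preimage_indicator_mul_one_sub_indicator_eq_one (A T : Set Ω) :
    (fun ω => A.indicator (fun _ => (1 : ℝ)) ω * (1 - T.indicator (fun _ => (1 : ℝ)) ω)) ⁻¹' {1} =
      A \ T := by
  ext ω
  by_cases hA : ω ∈ A <;> by_cases hT : ω ∈ T <;> simp [hA, hT]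

end

theorem sigma_algebra_generated_by_Ct_sup_null_eq_Gtilde_sup_null_general
    {Ω : Type*} {mΩ : MeasurableSpace Ω} (P : Measure Ω)
    (τ : Ω → ℝ≥0∞) (hτ0 : P {ω | τ ω = 0} = 0)
    (F : MeasureTheory.Filtration ℝ≥0 mΩ)
    (H : ℝ≥0 → Ω → ℝ)
    (hH : ∀ s : ℝ≥0, H s = Set.indicator {ω | τ ω ≤ (s : ℝ≥0∞)} (fun _ => (1 : ℝ)))
    (𝒩 : MeasurableSpace Ω)
    (h𝒩 : 𝒩 = MeasurableSpace.generateFrom {s : Set Ω | P s = 0})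
    (t : ℝ≥0)
    (Ct : Set (Ω → ℝ))
    (hCt : Ct = {ξ | ∃ (ζ : Ω → ℝ) (s : ℝ≥0), s ≤ t ∧ Measurable[F t] ζ ∧
      (∃ C : ℝ, ∀ ω, |ζ ω| ≤ C) ∧ ξ = fun ω => ζ ω * (1 - H s ω)}) :
    (⨆ ξ ∈ Ct, MeasurableSpace.comap ξ (inferInstance : MeasurableSpace ℝ)) ⊔ 𝒩 =
      (F t ⊔ (⨆ s ∈ Set.Iic t,
        MeasurableSpace.comap (H s) (inferInstance : MeasurableSpace ℝ))) ⊔ 𝒩 := by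
  set σC := ⨆ ξ ∈ Ct, MeasurableSpace.comap ξ (inferInstance : MeasurableSpace ℝ)
  set σH := ⨆ s ∈ Set.Iic t, MeasurableSpace.comap (H s) (inferInstance : MeasurableSpace ℝ)
  have comap_le_σC {ζ : Ω → ℝ} {s : ℝ≥0} (hs : s ≤ t) (hζ : Measurable[F t] ζ)
      (hζ1 : ∀ ω, |ζ ω| ≤ 1) :
      MeasurableSpace.comap (fun ω => ζ ω * (1 - H s ω)) inferInstance ≤ σC :=
    le_iSup₂_of_le (f := fun ξ _ => MeasurableSpace.comap ξ _) _
      (hCt ▸ ⟨ζ, s, hs, hζ, ⟨1, hζ1⟩, rfl⟩) le_rfl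
  have hC_le : σC ≤ F t ⊔ σH := iSup₂_le fun ξ hξ => by
    obtain ⟨ζ, s, hs, hζ, -, rfl⟩ := hCt ▸ hξ
    have hHs : Measurable[F t ⊔ σH] (H s) := Measurable.of_comap_le <|
      (le_iSup₂ (f := fun s _ => MeasurableSpace.comap (H s) _) s hs).trans le_sup_right
    exact ((hζ.mono le_sup_left le_rfl).mul (measurable_const.sub hHs)).comap_le
  have hH_le : σH ≤ σC := iSup₂_le fun s hs =>
    (MeasurableSpace.comap_le_comap_of_eq_comp (fun x => 1 - x)
      (measurable_const.sub measurable_id) (by funext ω; simp)).trans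
      (comap_le_σC (ζ := fun _ => 1) hs measurable_const (by simp))
  have hF_le : F t ≤ σC ⊔ 𝒩 := fun A hA => by
    have hτ : P {ω | τ ω ≤ ((0 : ℝ≥0) : ℝ≥0∞)} = 0 := by simpa using hτ0
    rw [← Set.sdiff_union_inter A {ω | τ ω ≤ ((0 : ℝ≥0) : ℝ≥0∞)}, h𝒩]
    refine measurableSet_sup_generateFrom_null_union (m := σC) P ?_
      (measure_mono_null inter_subset_right hτ)
    refine comap_le_σC (zero_le (a := t)) ((measurable_const (a := (1 : ℝ))).indicator hA)
      (fun ω => ?_) _ ⟨{1}, measurableSet_singleton 1, ?_⟩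
    · by_cases hω : ω ∈ A <;> simp [hω]
    · rw [hH, preimage_indicator_mul_one_sub_indicator_eq_one]
  exact le_antisymm (sup_le (hC_le.trans le_sup_left) le_sup_right)
    (sup_le (sup_le hF_le (hH_le.trans le_sup_left)) le_sup_right)

/-- Let `τ : Ω → [0, +∞]` with `P[τ = 0] = 0`, default process
`H_t = 1_{τ ≤ t}`, and let `F` be a filtration. With `C_t` the collection of random variables
`ξ = ζ (1 - H_s)`, `ζ` bounded `F_t`-measurable, `0 ≤ s ≤ t`, and `𝒩` the P-null sets, one has
`σ(C_t) ∨ 𝒩 = G̃_t ∨ 𝒩` where `G̃_t = F_t ∨ σ(H_s : 0 ≤ s ≤ t)`. -/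
theorem sigma_algebra_generated_by_Ct_sup_null_eq_Gtilde_sup_null
    {Ω : Type*} {mΩ : MeasurableSpace Ω} (P : Measure Ω) [IsProbabilityMeasure P]
    (τ : Ω → ℝ≥0∞) (hτ0 : P {ω | τ ω = 0} = 0)
    (F : MeasureTheory.Filtration ℝ≥0 mΩ)
    (H : ℝ≥0 → Ω → ℝ)
    (hH : ∀ s : ℝ≥0, H s = Set.indicator {ω | τ ω ≤ (s : ℝ≥0∞)} (fun _ => (1 : ℝ)))
    (𝒩 : MeasurableSpace Ω)
    (h𝒩 : 𝒩 = MeasurableSpace.generateFrom {s : Set Ω | P s = 0})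
    (t : ℝ≥0)
    (Ct : Set (Ω → ℝ))
    (hCt : Ct = {ξ | ∃ (ζ : Ω → ℝ) (s : ℝ≥0), s ≤ t ∧ Measurable[F t] ζ ∧
      (∃ C : ℝ, ∀ ω, |ζ ω| ≤ C) ∧ ξ = fun ω => ζ ω * (1 - H s ω)}) :
    (⨆ ξ ∈ Ct, MeasurableSpace.comap ξ (inferInstance : MeasurableSpace ℝ)) ⊔ 𝒩 =
      (F t ⊔ (⨆ s ∈ Set.Iic t,
        MeasurableSpace.comap (H s) (inferInstance : MeasurableSpace ℝ))) ⊔ 𝒩 :=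
  sigma_algebra_generated_by_Ct_sup_null_eq_Gtilde_sup_null_general P τ hτ0 F H hH 𝒩 h𝒩 t Ct hCt
end

section
/- Let τ be a random time satisfying hypothesis (A) (τ avoids F-stopping times: P[τ = σ < +∞] = 0 for every F-stopping time σ) and hypothesis (H) (for every t ≥ 0, F_∞ and G̃_t are conditionally independent given F_t). Then there exists a process A = (A_t)_{t≥0} such that: (i) for every t ≥ 0, A_t = E[1_{{τ > t}} | F_t] a.s. (A is a version of the Azéma supermartingale); (ii) every path of A is continuous and nonincreasing, with A_0 = 1; and (iii) almost surely, A_t > 0 for every t with t ≤ τ. -/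
open MeasureTheory Set Filter
open scoped ENNReal NNReal

variable {Ω : Type*}

/-- The default process `H_s = 1_{τ ≤ s}` of a random time `τ`. -/
noncomputable def defaultProcess (τ : Ω → ℝ≥0∞) (s : ℝ≥0) : Ω → ℝ :=
  Set.indicator {ω | τ ω ≤ (s : ℝ≥0∞)} (fun _ => (1 : ℝ))

/-- `ℋ_t = σ(H_s : 0 ≤ s ≤ t)`, the natural filtration of the default process. -/
noncomputable def natFiltDefault (τ : Ω → ℝ≥0∞) (t : ℝ≥0) : MeasurableSpace Ω :=
  ⨆ s ∈ Set.Iic t, MeasurableSpace.comap (defaultProcess τ s) (inferInstance : MeasurableSpace ℝ)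

/-- `G̃_t = F_t ∨ ℋ_t`. -/
noncomputable def enlTilde {mΩ : MeasurableSpace Ω} (F : Filtration ℝ≥0 mΩ)
    (τ : Ω → ℝ≥0∞) (t : ℝ≥0) : MeasurableSpace Ω :=
  F t ⊔ natFiltDefault τ t

/-- Hypothesis (A): `τ` avoids `F`-stopping times, i.e. `P[τ = σ < ∞] = 0` for every
`F`-stopping time `σ`. -/
def HypothesisA {mΩ : MeasurableSpace Ω} (P : Measure Ω) (F : Filtration ℝ≥0 mΩ)
    (τ : Ω → ℝ≥0∞) : Prop :=
  ∀ σ : Ω → ℝ≥0∞, (∀ t : ℝ≥0, MeasurableSet[F t] {ω | σ ω ≤ (t : ℝ≥0∞)}) →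
    P {ω | τ ω = σ ω ∧ σ ω ≠ ∞} = 0

/-- Conditional independence of `m1` and `m2` given `m0`: for all `A ∈ m1`, `B ∈ m2`,
`E[1_{A ∩ B} | m0] = E[1_A | m0] ⬝ E[1_B | m0]` a.s. -/
def CondIndepGiven {mΩ : MeasurableSpace Ω} (P : Measure Ω)
    (m0 m1 m2 : MeasurableSpace Ω) : Prop :=
  ∀ A B : Set Ω, MeasurableSet[m1] A → MeasurableSet[m2] B →
    (P[(A ∩ B).indicator (fun _ => (1 : ℝ)) | m0]) =ᵐ[P]
      fun ω => (P[A.indicator (fun _ => (1 : ℝ)) | m0]) ω *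
        (P[B.indicator (fun _ => (1 : ℝ)) | m0]) ω

/-- Hypothesis (H): for every `t`, `F_∞` and `G̃_t` are conditionally independent given `F_t`. -/
def HypothesisH {mΩ : MeasurableSpace Ω} (P : Measure Ω) (F : Filtration ℝ≥0 mΩ)
    (τ : Ω → ℝ≥0∞) : Prop :=
  ∀ t : ℝ≥0, CondIndepGiven P (F t) (⨆ s : ℝ≥0, F s) (enlTilde F τ t)

/-!
By (H), conditioning on `F_∞` or on `F_t` gives the same result for events of `G̃_t`. Hence, if
`κ ω` is the conditional law of `τ` given `F_∞`, then `t ↦ κ ω (t, ∞]` is a version of the Azéma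
supermartingale, and it is nonincreasing. For `ε > 0`, whether `κ ω` has an atom of mass `≥ ε` in
`[0, t]` can be read off its distribution function on a countable grid of `[0, t]`, whose values
are `F_t`-measurable up to null sets; by completeness, the first such atom is an `F`-stopping time.
Disintegrating `P` along `κ`, `τ` meets this stopping time with probability at least `ε` times the
probability that it is finite, so (A) forces it to be a.s. infinite. Thus `κ ω` a.s. has no atoms
in `[0, ∞)`, and its survival function is continuous and starts at `1`. Disintegrating once more,
`τ` a.s. lies strictly before the first `t` with `κ ω (t, ∞] = 0`, which gives positivity on
`[0, τ]`.
-/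

section Filtrations

variable {mΩ : MeasurableSpace Ω}

lemma natFiltDefault_le {τ : Ω → ℝ≥0∞} (hτ : Measurable τ) (t : ℝ≥0) :
    natFiltDefault τ t ≤ mΩ :=
  iSup₂_le fun _ _ => MeasurableSpace.comap_le_iff_le_map.mpr
    ((measurable_const.indicator (hτ measurableSet_Iic)).comp measurable_id)

lemma measurableSet_le_natFiltDefault (τ : Ω → ℝ≥0∞) (t : ℝ≥0) :
    MeasurableSet[natFiltDefault τ t] {ω | τ ω ≤ t} := by
  have h : {ω | τ ω ≤ t} = defaultProcess τ t ⁻¹' {1} := by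
    ext ω
    by_cases hω : τ ω ≤ t <;> simp [defaultProcess, hω]
  rw [h]
  exact le_iSup₂ (f := fun s (_ : s ∈ Iic t) =>
      MeasurableSpace.comap (defaultProcess τ s) (inferInstance : MeasurableSpace ℝ))
    t self_mem_Iic _ ⟨{1}, measurableSet_singleton 1, rfl⟩

lemma measurableSet_le_enlTilde (F : Filtration ℝ≥0 mΩ) (τ : Ω → ℝ≥0∞) (t : ℝ≥0) :
    MeasurableSet[enlTilde F τ t] {ω | τ ω ≤ t} :=
  le_sup_right (a := F t) _ (measurableSet_le_natFiltDefault τ t)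

lemma measurableSet_lt_enlTilde (F : Filtration ℝ≥0 mΩ) (τ : Ω → ℝ≥0∞) (t : ℝ≥0) :
    MeasurableSet[enlTilde F τ t] {ω | t < τ ω} := by
  simpa only [compl_ofPred, not_le] using (measurableSet_le_enlTilde F τ t).compl

lemma enlTilde_le (F : Filtration ℝ≥0 mΩ) {τ : Ω → ℝ≥0∞} (hτ : Measurable τ) (t : ℝ≥0) :
    enlTilde F τ t ≤ mΩ :=
  sup_le (F.le t) (natFiltDefault_le hτ t)

lemma measurable_id_iSup (F : Filtration ℝ≥0 mΩ) : Measurable[mΩ, ⨆ s, F s] id :=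
  measurable_id'' (iSup_le F.le)

end Filtrations

section ConditionalIndependence

variable {mΩ : MeasurableSpace Ω} {P : Measure Ω} [IsFiniteMeasure P]

theorem CondIndepGiven.condExp_indicator_ae_eq {m₀ m₁ m₂ : MeasurableSpace Ω}
    (h : CondIndepGiven P m₀ m₁ m₂) (h₀₁ : m₀ ≤ m₁) (h₁ : m₁ ≤ mΩ) (h₂ : m₂ ≤ mΩ) {B : Set Ω}
    (hB : MeasurableSet[m₂] B) :
    P[B.indicator (fun _ => (1 : ℝ)) | m₁] =ᵐ[P] P[B.indicator (fun _ => (1 : ℝ)) | m₀] := by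
  have h₀ : m₀ ≤ mΩ := h₀₁.trans h₁
  set g := P[B.indicator (fun _ => (1 : ℝ)) | m₀]
  refine (ae_eq_condExp_of_forall_setIntegral_eq h₁ ((integrable_const 1).indicator (h₂ _ hB))
    (fun s _ _ => integrable_condExp.integrableOn) (fun s hs _ => ?_)
    (stronglyMeasurable_condExp.mono h₀₁).aestronglyMeasurable).symm
  have hs' : MeasurableSet[mΩ] s := h₁ _ hs
  have hgs : g * s.indicator (fun _ => (1 : ℝ)) = s.indicator g := by
    ext ω; by_cases hω : ω ∈ s <;> simp [hω]
  -- `g` is `m₀`-measurable, so `1_s` may be replaced by `P[1_s | m₀]`; conditional independence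
  -- then recombines the product
  calc ∫ ω in s, g ω ∂P
      = ∫ ω, P[g * s.indicator (fun _ => (1 : ℝ)) | m₀] ω ∂P := by
        rw [integral_condExp h₀, hgs, integral_indicator hs']
    _ = ∫ ω, P[s.indicator (fun _ => (1 : ℝ)) | m₀] ω * g ω ∂P := by
        refine integral_congr_ae ?_
        filter_upwards [condExp_mul_of_stronglyMeasurable_left stronglyMeasurable_condExp
          (by rw [hgs]; exact integrable_condExp.indicator hs')
          ((integrable_const 1).indicator hs')]
          with ω hω
        rw [hω, Pi.mul_apply, mul_comm]
    _ = ∫ ω, P[(s ∩ B).indicator (fun _ => (1 : ℝ)) | m₀] ω ∂P :=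
        integral_congr_ae (h s B hs hB).symm
    _ = ∫ ω in s, B.indicator (fun _ => (1 : ℝ)) ω ∂P := by
        rw [integral_condExp h₀, ← indicator_indicator, integral_indicator hs']

end ConditionalIndependence

section SurvivalFunction

variable (ν : Measure ℝ≥0∞)

noncomputable def survivalFun (t : ℝ≥0) : ℝ := ν.real (Ioi (t : ℝ≥0∞))

lemma survivalFun_zero [IsProbabilityMeasure ν] (h : ν {0} = 0) : survivalFun ν 0 = 1 := by
  rw [survivalFun, ENNReal.coe_zero, ← compl_Iic, ← ENNReal.bot_eq_zero, Iic_bot,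
    ENNReal.bot_eq_zero, probReal_compl_eq_one_sub (measurableSet_singleton 0), measureReal_def, h,
    ENNReal.toReal_zero, sub_zero]

variable [IsFiniteMeasure ν]

lemma antitone_survivalFun : Antitone (survivalFun ν) := fun _ _ hst =>
  measureReal_mono (Ioi_subset_Ioi (ENNReal.coe_le_coe.2 hst))

/-- Only the atom at `t` can make `1_{x > s}` jump as `s → t`, so dominated convergence
applies. -/
lemma continuous_survivalFun (h : ∀ s : ℝ≥0, ν {(s : ℝ≥0∞)} = 0) :
    Continuous (survivalFun ν) := by
  have hint : survivalFun ν = fun s : ℝ≥0 => ∫ x, (Ioi (s : ℝ≥0∞)).indicator 1 x ∂ν := by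
    ext s; rw [integral_indicator_one measurableSet_Ioi, survivalFun]
  rw [hint, continuous_iff_continuousAt]
  intro t
  refine continuousAt_of_dominated (bound := fun _ => 1)
    (Eventually.of_forall fun _ =>
      (measurable_one.indicator measurableSet_Ioi).aestronglyMeasurable)
    (Eventually.of_forall fun s => Eventually.of_forall fun x => ?_) (integrable_const 1) ?_
  · exact (norm_indicator_le_norm_self _ x).trans (by simp)
  filter_upwards [compl_mem_ae_iff.2 (h t)] with x hx
  rcases lt_or_gt_of_ne (show x ≠ t from hx) with hxt | htx
  · refine continuousAt_const.congr (f := fun _ => (0 : ℝ)) ?_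
    filter_upwards [ENNReal.continuous_coe.continuousAt.eventually (lt_mem_nhds hxt)] with s hs
    rw [indicator_of_notMem (show x ∉ Ioi (s : ℝ≥0∞) from not_lt.2 hs.le)]
  · refine continuousAt_const.congr (f := fun _ => (1 : ℝ)) ?_
    filter_upwards [ENNReal.continuous_coe.continuousAt.eventually (gt_mem_nhds htx)] with s hs
    rw [indicator_of_mem (show x ∈ Ioi (s : ℝ≥0∞) from hs), Pi.one_apply]

end SurvivalFunction

section TailTime

variable {ν : Measure ℝ≥0∞}

noncomputable def tailTime (ν : Measure ℝ≥0∞) : ℝ≥0∞ := sInf {x | ν (Ioi x) = 0}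

lemma measure_Ioi_tailTime (ν : Measure ℝ≥0∞) : ν (Ioi (tailTime ν)) = 0 := by
  have hU : Ioi (tailTime ν) = ⋃ x ∈ {x | ν (Ioi x) = 0}, Ioi x := by
    ext y
    simp only [mem_Ioi, mem_iUnion, exists_prop]
    exact ⟨fun hy => sInf_lt_iff.1 hy, fun ⟨x, hx, hxy⟩ => (sInf_le hx).trans_lt hxy⟩
  obtain ⟨C, hCS, hC, hCU⟩ :=
    TopologicalSpace.isOpen_biUnion_countable {x | ν (Ioi x) = 0} Ioi fun _ _ => isOpen_Ioi
  rw [hU, ← hCU]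
  exact (measure_biUnion_null_iff hC).2 fun x hx => hCS hx

lemma tailTime_le_iff {x : ℝ≥0∞} : tailTime ν ≤ x ↔ ν (Ioi x) = 0 :=
  ⟨fun h => measure_mono_null (Ioi_subset_Ioi h) (measure_Ioi_tailTime ν), fun h => sInf_le h⟩

lemma measure_Ici_tailTime (h : ∀ s : ℝ≥0, ν {(s : ℝ≥0∞)} = 0) (hT : tailTime ν ≠ ∞) :
    ν (Ici (tailTime ν)) = 0 := by
  rw [← Ioi_insert, insert_eq]
  refine measure_union_null ?_ (measure_Ioi_tailTime ν)
  simpa [ENNReal.coe_toNNReal hT] using h (tailTime ν).toNNReal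

lemma ProbabilityTheory.Kernel.measurable_tailTime {β : Type*} [MeasurableSpace β]
    (κ : Kernel β ℝ≥0∞) : Measurable fun b => tailTime (κ b) :=
  measurable_of_Iic fun x => by
    simpa only [preimage, mem_Iic, tailTime_le_iff, mem_singleton_iff] using
      κ.measurable_coe measurableSet_Ioi (measurableSet_singleton 0)

lemma survivalFun_pos [IsFiniteMeasure ν] {t : ℝ≥0} (ht : (t : ℝ≥0∞) < tailTime ν) :
    0 < survivalFun ν t :=
  ENNReal.toReal_pos (fun h => (tailTime_le_iff.2 h).not_gt ht) (measure_ne_top _ _)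

end TailTime

section AtomTime

noncomputable def atomTime (ε : ℝ≥0∞) (ν : Measure ℝ≥0∞) : ℝ≥0∞ :=
  sInf {x | x ≠ ∞ ∧ ε ≤ ν {x}}

variable {ν : Measure ℝ≥0∞} {ε : ℝ≥0∞}

lemma atomTime_le {x : ℝ≥0∞} (hx : x ≠ ∞) (h : ε ≤ ν {x}) : atomTime ε ν ≤ x :=
  sInf_le ⟨hx, h⟩

lemma measure_singleton_eq_zero_of_atomTime_eq_top (h : ∀ n : ℕ, atomTime (n : ℝ≥0∞)⁻¹ ν = ∞)
    (s : ℝ≥0) : ν {(s : ℝ≥0∞)} = 0 := by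
  by_contra hs
  obtain ⟨n, hn⟩ := ENNReal.exists_inv_nat_lt hs
  exact ((atomTime_le ENNReal.coe_ne_top hn.le).trans_lt ENNReal.coe_lt_top).ne (h n)

variable [IsFiniteMeasure ν]

lemma finite_setOf_le_measure_singleton (hε : ε ≠ 0) : {x : ℝ≥0∞ | ε ≤ ν {x}}.Finite :=
  Measure.finite_const_le_meas_of_disjoint_iUnion ν (pos_iff_ne_zero.2 hε) (As := fun x => {x})
    (fun _ => measurableSet_singleton _) (fun _ _ hxy => disjoint_singleton.2 hxy)
    (measure_ne_top ν _)

lemma atomTime_mem (hε : ε ≠ 0) (h : atomTime ε ν ≠ ∞) :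
    atomTime ε ν ∈ {x | x ≠ ∞ ∧ ε ≤ ν {x}} := by
  refine Nonempty.csInf_mem ?_ ((finite_setOf_le_measure_singleton hε).subset fun x hx => hx.2)
  exact nonempty_iff_ne_empty.2 fun he => h (by rw [atomTime, he, sInf_empty])

lemma atomTime_le_coe_iff (hε : ε ≠ 0) {t : ℝ≥0} :
    atomTime ε ν ≤ t ↔ ∃ s : ℝ≥0, s ≤ t ∧ ε ≤ ν {(s : ℝ≥0∞)} := by
  refine ⟨fun h => ?_, fun ⟨s, hst, hs⟩ =>
    (atomTime_le ENNReal.coe_ne_top hs).trans (ENNReal.coe_le_coe.2 hst)⟩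
  have hfin : atomTime ε ν ≠ ∞ := ne_top_of_le_ne_top ENNReal.coe_ne_top h
  have hmem := (atomTime_mem hε hfin).2
  rw [← ENNReal.coe_toNNReal hfin] at h hmem
  exact ⟨_, ENNReal.coe_le_coe.1 h, hmem⟩

end AtomTime

section Grid

open TopologicalSpace
open scoped Topology

noncomputable def gridPt (t : ℝ≥0) (i : ℕ) : ℝ≥0 := min t (denseSeq ℝ≥0 i)

lemma exists_gridPt_near {s t η : ℝ≥0} (hs : 0 < s) (hst : s ≤ t) (hη : 0 < η) :
    ∃ i j, gridPt t i < s ∧ s ≤ gridPt t j ∧ gridPt t j < gridPt t i + η := by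
  have hdense := denseRange_denseSeq ℝ≥0
  have hη2 : 0 < η / 2 := half_pos hη
  obtain ⟨_, ⟨i, rfl⟩, hi₁, hi₂⟩ := hdense.exists_between (tsub_lt_self hs hη2)
  obtain ⟨_, ⟨j, rfl⟩, hj₁, hj₂⟩ := hdense.exists_between (lt_add_of_pos_right s hη2)
  have hi : gridPt t i = denseSeq ℝ≥0 i := min_eq_right (hi₂.le.trans hst)
  refine ⟨i, j, hi ▸ hi₂, le_min hst hj₁.le, ?_⟩
  calc gridPt t j ≤ denseSeq ℝ≥0 j := min_le_right _ _
    _ < s + η / 2 := hj₂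
    _ < gridPt t i + η / 2 + η / 2 := by rw [hi]; gcongr; exact lt_add_of_tsub_lt_right hi₁
    _ = gridPt t i + η := by rw [add_assoc, add_halves]

/-- `g` stands for a distribution function `q ↦ ν (Iic q)`, sampled at `0` and on a countable
dense subset of `[0, t]`; the first disjunct detects an atom at `0`. -/
def HasJumpOnGrid (g : ℝ≥0 → ℝ≥0∞) (t : ℝ≥0) (ε : ℝ≥0∞) : Prop :=
  ε ≤ g 0 ∨ ∀ n : ℕ, ∃ i j, gridPt t i < gridPt t j ∧
    (gridPt t j : ℝ≥0∞) < gridPt t i + (n : ℝ≥0∞)⁻¹ ∧ g (gridPt t i) + ε ≤ g (gridPt t j)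

lemma measurableSet_hasJumpOnGrid {m : MeasurableSpace Ω} {g : Ω → ℝ≥0 → ℝ≥0∞}
    {t : ℝ≥0} {ε : ℝ≥0∞} (h₀ : Measurable fun ω => g ω 0)
    (hg : ∀ i, Measurable fun ω => g ω (gridPt t i)) :
    MeasurableSet {ω | HasJumpOnGrid (g ω) t ε} := by
  refine measurableSet_setOfPred.2 <|
    (measurableSet_setOfPred.1 (measurableSet_le measurable_const h₀)).or <|
    Measurable.forall fun n => Measurable.exists fun i => Measurable.exists fun j =>
      measurable_const.and <| measurable_const.and <|
        measurableSet_setOfPred.1 (measurableSet_le ((hg i).add_const ε) (hg j))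

variable {ν : Measure ℝ≥0∞} [IsFiniteMeasure ν] {ε : ℝ≥0∞} {t : ℝ≥0}

lemma measure_Iic_add_le_iff {q r : ℝ≥0∞} (hqr : q ≤ r) :
    ν (Iic q) + ε ≤ ν (Iic r) ↔ ε ≤ ν (Ioc q r) := by
  rw [← Iic_union_Ioc_eq_Iic hqr, measure_union (Iic_disjoint_Ioc le_rfl) measurableSet_Ioc,
    ENNReal.add_le_add_iff_left (measure_ne_top _ _)]

lemma hasJumpOnGrid_of_le_measure_singleton {s : ℝ≥0} (hst : s ≤ t)
    (hs : ε ≤ ν {(s : ℝ≥0∞)}) : HasJumpOnGrid (fun q => ν (Iic q)) t ε := by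
  rcases eq_zero_or_pos s with rfl | hs₀
  · exact Or.inl (hs.trans (measure_mono (singleton_subset_iff.2 self_mem_Iic)))
  refine Or.inr fun n => ?_
  obtain ⟨η, hη₀, hηn⟩ :=
    ENNReal.lt_iff_exists_nnreal_btwn.1 (ENNReal.inv_pos.2 (ENNReal.natCast_ne_top n))
  obtain ⟨i, j, hi, hj, hij⟩ := exists_gridPt_near hs₀ hst (ENNReal.coe_pos.1 hη₀)
  refine ⟨i, j, hi.trans_le hj, ?_, ?_⟩
  · calc (gridPt t j : ℝ≥0∞) < (gridPt t i + η : ℝ≥0) := ENNReal.coe_lt_coe.2 hij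
      _ ≤ gridPt t i + (n : ℝ≥0∞)⁻¹ := by rw [ENNReal.coe_add]; gcongr
  · rw [measure_Iic_add_le_iff (ENNReal.coe_le_coe.2 (hi.trans_le hj).le)]
    exact hs.trans (measure_mono (singleton_subset_iff.2
      ⟨ENNReal.coe_lt_coe.2 hi, ENNReal.coe_le_coe.2 hj⟩))

lemma exists_le_measure_singleton_of_hasJumpOnGrid
    (h : HasJumpOnGrid (fun q => ν (Iic q)) t ε) : ∃ s : ℝ≥0, s ≤ t ∧ ε ≤ ν {(s : ℝ≥0∞)} := by
  rcases h with h₀ | h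
  · exact ⟨0, zero_le, h₀.trans_eq (congrArg ν (by ext; simp))⟩
  choose i j hij hji hg using h
  set a : ℕ → ℝ≥0∞ := fun n => gridPt t (i n)
  set b : ℕ → ℝ≥0∞ := fun n => gridPt t (j n)
  obtain ⟨s, φ, hφ, hb⟩ := CompactSpace.tendsto_subseq b
  have ha : Tendsto (a ∘ φ) atTop (𝓝 s) := by
    refine tendsto_of_tendsto_of_tendsto_of_le_of_le (g := fun k => b (φ k) - (φ k : ℝ≥0∞)⁻¹)
      ?_ hb (fun k => tsub_le_iff_right.2 (hji _).le)
      (fun k => ENNReal.coe_le_coe.2 (hij _).le)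
    simpa using ENNReal.Tendsto.sub hb
      (ENNReal.tendsto_inv_nat_nhds_zero.comp hφ.tendsto_atTop) (Or.inr ENNReal.zero_ne_top)
  have hst : s ≤ t := le_of_tendsto' hb fun k => ENNReal.coe_le_coe.2 (min_le_left _ _)
  have hs : s ≠ ∞ := ne_top_of_le_ne_top ENNReal.coe_ne_top hst
  rw [← ENNReal.coe_toNNReal hs] at hst
  refine ⟨s.toNNReal, ENNReal.coe_le_coe.1 hst, ?_⟩
  rw [ENNReal.coe_toNNReal hs]
  by_contra! hlt
  -- by outer regularity, a neighbourhood of `s` has mass `< ε`, yet it eventually contains the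
  -- grid intervals of mass `≥ ε`
  obtain ⟨U, hsU, hU, hUε⟩ := exists_isOpen_lt_of_lt {s} ε hlt
  obtain ⟨k, hk⟩ := ((ha.Icc hb).eventually
    (eventually_smallSets_subset.2 (hU.mem_nhds (hsU rfl)))).exists
  have hk' := (measure_Iic_add_le_iff (ENNReal.coe_le_coe.2 (hij (φ k)).le)).1 (hg (φ k))
  exact (hk'.trans (measure_mono (Ioc_subset_Icc_self.trans hk))).not_gt hUε

lemma atomTime_le_iff_hasJumpOnGrid (hε : ε ≠ 0) :
    atomTime ε ν ≤ t ↔ HasJumpOnGrid (fun q => ν (Iic q)) t ε := by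
  rw [atomTime_le_coe_iff hε]
  exact ⟨fun ⟨s, hst, hs⟩ => hasJumpOnGrid_of_le_measure_singleton hst hs,
    exists_le_measure_singleton_of_hasJumpOnGrid⟩

end Grid

section Completion

variable {mΩ : MeasurableSpace Ω} {P : Measure Ω} {m : MeasurableSpace Ω}

lemma measurableSet_of_ae_eq (hnull : ∀ s, P s = 0 → MeasurableSet[m] s) {s t : Set Ω}
    (hst : s =ᵐ[P] t) (ht : MeasurableSet[m] t) : MeasurableSet[m] s := by
  simpa only [symmDiff_symmDiff_cancel_right] using
    (hnull _ (measure_symmDiff_eq_zero_iff.2 hst)).symmDiff ht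

lemma measurable_of_measurableSet_le_coe {f : Ω → ℝ≥0∞}
    (h : ∀ t : ℝ≥0, MeasurableSet[m] {ω | f ω ≤ t}) : Measurable[m] f :=
  measurable_of_Iic fun x => x.recTopCoe (by simp) h

lemma measurableSet_atomTime_le (hnull : ∀ s, P s = 0 → MeasurableSet[m] s)
    (ν : Ω → Measure ℝ≥0∞) [hν : ∀ ω, IsFiniteMeasure (ν ω)] {ε : ℝ≥0∞} (hε : ε ≠ 0) {t : ℝ≥0}
    (f : ℝ≥0 → Ω → ℝ) (hf_meas : ∀ q ≤ t, Measurable[m] (f q))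
    (hf : ∀ q, f q =ᵐ[P] fun ω => (ν ω).real (Iic q)) :
    MeasurableSet[m] {ω | atomTime ε (ν ω) ≤ t} := by
  have hcdf : ∀ q, ∀ᵐ ω ∂P, ENNReal.ofReal (f q ω) = ν ω (Iic q) := fun q =>
    (hf q).mono fun ω h => by rw [h, ofReal_measureReal]
  refine measurableSet_of_ae_eq hnull (eventuallyEq_set.2 ?_) (measurableSet_hasJumpOnGrid (ε := ε)
    (g := fun ω q => ENNReal.ofReal (f q ω)) (ENNReal.measurable_ofReal.comp (hf_meas 0 zero_le))
    fun i => ENNReal.measurable_ofReal.comp (hf_meas _ (min_le_left _ _)))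
  filter_upwards [hcdf 0, ae_all_iff.2 fun i => hcdf (gridPt t i)] with ω h₀ hg
  rw [atomTime_le_iff_hasJumpOnGrid hε]
  simp only [HasJumpOnGrid, h₀, hg]

end Completion

section ConditionalDistribution

open ProbabilityTheory

variable {β : Type*} {mβ : MeasurableSpace β} {mΩ : MeasurableSpace Ω} {P : Measure Ω}
  [IsFiniteMeasure P] {X : Ω → β}

lemma measure_eq_lintegral_condDistrib {γ : Type*} [MeasurableSpace γ] [StandardBorelSpace γ]
    [Nonempty γ] {Y : Ω → γ} (hX : Measurable X) (hY : Measurable Y) {W : Set (β × γ)}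
    (hW : MeasurableSet W) :
    P {ω | (X ω, Y ω) ∈ W} = ∫⁻ ω, condDistrib Y X P (X ω) (Prod.mk (X ω) ⁻¹' W) ∂P := by
  rw [← lintegral_map (Kernel.measurable_kernel_prodMk_left hW) hX, ← Measure.compProd_apply hW,
    compProd_map_condDistrib hY.aemeasurable, Measure.map_apply (hX.prodMk hY) hW]
  rfl

variable {τ : Ω → ℝ≥0∞}

lemma measure_ne_top_eq_zero_of_avoids_atom (hX : Measurable X) (hτ : Measurable τ)
    {σ : β → ℝ≥0∞} (hσ : Measurable σ) {ε : ℝ≥0∞} (hε : ε ≠ 0)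
    (hatom : ∀ b, σ b ≠ ∞ → ε ≤ condDistrib τ X P b {σ b})
    (havoid : P {ω | τ ω = σ (X ω) ∧ σ (X ω) ≠ ∞} = 0) : P {ω | σ (X ω) ≠ ∞} = 0 := by
  have hW : MeasurableSet {p : β × ℝ≥0∞ | p.2 = σ p.1 ∧ σ p.1 ≠ ∞} :=
    (measurableSet_eq_fun measurable_snd (hσ.comp measurable_fst)).inter
      ((hσ.comp measurable_fst) (measurableSet_singleton ∞).compl)
  have h := measure_eq_lintegral_condDistrib (P := P) hX hτ hW
  simp only [mem_ofPred_eq] at h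
  rw [h] at havoid
  have hle : ε * P {ω | σ (X ω) ≠ ∞} ≤ 0 := by
    rw [← havoid, ← lintegral_indicator_const
      (show MeasurableSet {ω | σ (X ω) ≠ ∞} from (hσ.comp hX) (measurableSet_singleton ∞).compl)]
    refine lintegral_mono fun ω => ?_
    by_cases hω : σ (X ω) = ∞
    · simp [hω]
    · simpa [hω] using hatom _ hω
  simpa [hε] using hle

lemma ae_lt_tailTime_condDistrib (hX : Measurable X) (hτ : Measurable τ)
    (hatoms : ∀ᵐ ω ∂P, ∀ s : ℝ≥0, condDistrib τ X P (X ω) {(s : ℝ≥0∞)} = 0) :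
    ∀ᵐ ω ∂P, ∀ t : ℝ≥0, (t : ℝ≥0∞) ≤ τ ω → (t : ℝ≥0∞) < tailTime (condDistrib τ X P (X ω)) := by
  have hT := (condDistrib τ X P).measurable_tailTime
  have hW : MeasurableSet {p : β × ℝ≥0∞ |
      tailTime (condDistrib τ X P p.1) ≤ p.2 ∧ tailTime (condDistrib τ X P p.1) ≠ ∞} :=
    (measurableSet_le (hT.comp measurable_fst) measurable_snd).inter
      ((hT.comp measurable_fst) (measurableSet_singleton ∞).compl)
  have hnull : P {ω | tailTime (condDistrib τ X P (X ω)) ≤ τ ω ∧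
      tailTime (condDistrib τ X P (X ω)) ≠ ∞} = 0 := by
    have h := measure_eq_lintegral_condDistrib (P := P) hX hτ hW
    simp only [mem_ofPred_eq] at h
    rw [h]
    refine (lintegral_congr_ae ?_).trans lintegral_zero
    filter_upwards [hatoms] with ω hω
    rcases eq_or_ne (tailTime (condDistrib τ X P (X ω))) ∞ with hfin | hfin
    · exact measure_mono_null (fun y hy => (hy.2 hfin).elim) measure_empty
    · exact measure_mono_null (fun y hy => hy.1) (measure_Ici_tailTime hω hfin)
  filter_upwards [measure_eq_zero_iff_ae_notMem.1 hnull] with ω hω t ht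
  exact lt_of_not_ge fun h => hω ⟨h.trans ht, ne_top_of_le_ne_top ENNReal.coe_ne_top h⟩

end ConditionalDistribution

lemma exists_ae_eq_forall_measure_coe_singleton_eq_zero {mΩ : MeasurableSpace Ω}
    {P : Measure Ω} (κ : Ω → Measure ℝ≥0∞) [hκ : ∀ ω, IsProbabilityMeasure (κ ω)]
    (h : ∀ᵐ ω ∂P, ∀ s : ℝ≥0, κ ω {(s : ℝ≥0∞)} = 0) :
    ∃ ν : Ω → Measure ℝ≥0∞, (∀ ω, IsProbabilityMeasure (ν ω)) ∧
      (∀ ω (s : ℝ≥0), ν ω {(s : ℝ≥0∞)} = 0) ∧ ∀ᵐ ω ∂P, ν ω = κ ω := by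
  classical
  refine ⟨fun ω => if ∀ s : ℝ≥0, κ ω {(s : ℝ≥0∞)} = 0 then κ ω else Measure.dirac ∞,
    fun ω => ?_, fun ω s => ?_, h.mono fun ω hω => if_pos hω⟩
  · dsimp only
    split_ifs <;> infer_instance
  · dsimp only
    split_ifs with hω
    · exact hω s
    · simp

section AzemaSupermartingale

open ProbabilityTheory

variable {mΩ : MeasurableSpace Ω} (P : Measure Ω) [IsFiniteMeasure P] (F : Filtration ℝ≥0 mΩ)
  (τ : Ω → ℝ≥0∞)

/-- The conditional law of `τ` given `F_∞`, a kernel from `(Ω, F_∞)`. -/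
noncomputable abbrev condLaw : @Kernel Ω ℝ≥0∞ (⨆ s, F s) _ :=
  @condDistrib Ω Ω ℝ≥0∞ _ _ _ mΩ (⨆ s, F s) τ id P _

variable {P F τ}

lemma condLaw_ae_eq_condExp (hτ : Measurable τ) (hH : HypothesisH P F τ) {t : ℝ≥0}
    {s : Set ℝ≥0∞} (hs : MeasurableSet s) (hst : MeasurableSet[enlTilde F τ t] (τ ⁻¹' s)) :
    (fun ω => (condLaw P F τ ω).real s) =ᵐ[P] P[(τ ⁻¹' s).indicator (fun _ => (1 : ℝ)) | F t] := by
  have h := condDistrib_ae_eq_condExp (μ := P) (measurable_id_iSup F) hτ hs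
  rw [MeasurableSpace.comap_id] at h
  exact h.trans
    ((hH t).condExp_indicator_ae_eq (le_iSup _ t) (iSup_le F.le) (enlTilde_le F hτ t) hst)

/-- The first atom of mass `≥ ε` of the conditional law is an `F`-stopping time, so (A) makes it
a.s. infinite. -/
lemma condLaw_noAtoms (hτ : Measurable τ)
    (hcomplete : ∀ (t : ℝ≥0) (s : Set Ω), P s = 0 → MeasurableSet[F t] s)
    (hA : HypothesisA P F τ) (hH : HypothesisH P F τ) :
    ∀ᵐ ω ∂P, ∀ s : ℝ≥0, condLaw P F τ ω {(s : ℝ≥0∞)} = 0 := by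
  have hε : ∀ n : ℕ, (n : ℝ≥0∞)⁻¹ ≠ 0 := fun n => ENNReal.inv_ne_zero.2 (ENNReal.natCast_ne_top n)
  have hstop : ∀ (n : ℕ) (t : ℝ≥0),
      MeasurableSet[F t] {ω | atomTime (n : ℝ≥0∞)⁻¹ (condLaw P F τ ω) ≤ t} := fun n t =>
    measurableSet_atomTime_le (hcomplete t) _ (hν := fun _ => inferInstance) (hε n)
      (fun q => P[{ω | τ ω ≤ q}.indicator (fun _ => (1 : ℝ)) | F q])
      (fun q hq => (stronglyMeasurable_condExp.mono (F.mono hq)).measurable)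
      fun q =>
        (condLaw_ae_eq_condExp hτ hH measurableSet_Iic (measurableSet_le_enlTilde F τ q)).symm
  have hnull : ∀ n : ℕ, ∀ᵐ ω ∂P, atomTime (n : ℝ≥0∞)⁻¹ (condLaw P F τ ω) = ∞ := fun n =>
    ae_iff.2 <| measure_ne_top_eq_zero_of_avoids_atom (measurable_id_iSup F) hτ
      (measurable_of_measurableSet_le_coe fun t => le_iSup (⇑F) t _ (hstop n t)) (hε n)
      (fun b hb => (atomTime_mem (hε n) hb).2) (hA _ (hstop n))
  filter_upwards [ae_all_iff.2 hnull] with ω hω using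
    measure_singleton_eq_zero_of_atomTime_eq_top hω

end AzemaSupermartingale

theorem azema_continuous_decreasing_positive_version_general
    {mΩ : MeasurableSpace Ω} (P : Measure Ω) [IsProbabilityMeasure P]
    (F : MeasureTheory.Filtration ℝ≥0 mΩ)
    (hFcomplete : ∀ (t : ℝ≥0) (s : Set Ω), P s = 0 → MeasurableSet[F t] s)
    (τ : Ω → ℝ≥0∞) (hτmeas : Measurable τ)
    (hypA : HypothesisA P F τ) (hypH : HypothesisH P F τ) :
    ∃ A : ℝ≥0 → Ω → ℝ,
      (∀ t : ℝ≥0,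
        A t =ᵐ[P] P[Set.indicator {ω | (t : ℝ≥0∞) < τ ω} (fun _ => (1 : ℝ)) | F t]) ∧
      (∀ ω, Continuous fun s : ℝ≥0 => A s ω) ∧
      (∀ ω, Antitone fun s : ℝ≥0 => A s ω) ∧
      (∀ ω, A 0 ω = 1) ∧
      (∀ᵐ ω ∂P, ∀ t : ℝ≥0, (t : ℝ≥0∞) ≤ τ ω → 0 < A t ω) := by
  have hatoms := condLaw_noAtoms hτmeas hFcomplete hypA hypH
  obtain ⟨ν, hν_prob, hν_atoms, hν⟩ := exists_ae_eq_forall_measure_coe_singleton_eq_zero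
    (condLaw P F τ) (hκ := fun _ => inferInstance) hatoms
  refine ⟨fun t ω => survivalFun (ν ω) t, fun t => ?_,
    fun ω => continuous_survivalFun _ (hν_atoms ω), fun ω => antitone_survivalFun _,
    fun ω => survivalFun_zero _ (by simpa using hν_atoms ω 0), ?_⟩
  · refine EventuallyEq.trans ?_
      (condLaw_ae_eq_condExp hτmeas hypH measurableSet_Ioi (measurableSet_lt_enlTilde F τ t))
    filter_upwards [hν] with ω hω
    rw [← hω]
    rfl
  · filter_upwards [hν, ae_lt_tailTime_condDistrib (measurable_id_iSup F) hτmeas hatoms]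
      with ω hω htail t ht
    rw [hω]
    exact survivalFun_pos (htail t ht)

/-- Under hypotheses (A) and (H), there is a version `A` of the Azéma
supermartingale of `τ` all of whose paths are continuous and nonincreasing with `A_0 = 1`,
and which is a.s. strictly positive on `[0, τ]`. -/
theorem azema_continuous_decreasing_positive_version
    {mΩ : MeasurableSpace Ω} (P : Measure Ω) [IsProbabilityMeasure P]
    (F : MeasureTheory.Filtration ℝ≥0 mΩ)
    (hFrc : ∀ t : ℝ≥0, F t = ⨅ (ε : ℝ≥0) (_ : 0 < ε), F (t + ε))
    (hFcomplete : ∀ (t : ℝ≥0) (s : Set Ω), P s = 0 → MeasurableSet[F t] s)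
    (τ : Ω → ℝ≥0∞) (hτmeas : Measurable τ) (hτpos : ∀ ω, 0 < τ ω)
    (hypA : HypothesisA P F τ) (hypH : HypothesisH P F τ) :
    ∃ A : ℝ≥0 → Ω → ℝ,
      (∀ t : ℝ≥0,
        A t =ᵐ[P] P[Set.indicator {ω | (t : ℝ≥0∞) < τ ω} (fun _ => (1 : ℝ)) | F t]) ∧
      (∀ ω, Continuous fun s : ℝ≥0 => A s ω) ∧
      (∀ ω, Antitone fun s : ℝ≥0 => A s ω) ∧
      (∀ ω, A 0 ω = 1) ∧
      (∀ᵐ ω ∂P, ∀ t : ℝ≥0, (t : ℝ≥0∞) ≤ τ ω → 0 < A t ω) :=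
  azema_continuous_decreasing_positive_version_general P F hFcomplete τ hτmeas hypA hypH
end

section
/- Assume hypotheses (A) and (H), and let A be a version of the Azéma supermartingale of τ with continuous nonincreasing paths, A_0 = 1, and such that a.s. A_t > 0 for all t ≤ τ. Then for every t ≥ 0 the random variable −log(A_{t∧τ}) is integrable and E[−log(A_{t∧τ})] = P[τ ≤ t]. -/
/-!
Under (H), `P(G ∩ {s < τ}) = E[1_G A_s]` for every `G ∈ F_∞`; since `A` is continuous, this
passes from fixed times `s` to `F_∞`-measurable random times, approximated from above by grid
values. For `c < 1` let `σ_c` be the first time `A` drops to `c`. Then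
`{A_{t∧τ} ≤ c} = {A_t ≤ c} ∩ {σ_c ≤ τ}`, (A) allows `σ_c ≤ τ` to be replaced by `σ_c < τ`, and
`A_{σ_c} = c` gives `P(A_{t∧τ} ≤ c) = c P(A_t ≤ c)`. Writing
`-log x = ∫_0^∞ 1{x ≤ e^{-u}} du` and `1 - y = ∫_0^∞ e^{-u} 1{y ≤ e^{-u}} du`, Tonelli turns this
into `E[-log A_{t∧τ}] = E[1 - A_t] = P(τ ≤ t)`.
-/

open MeasureTheory Set Filter
open scoped ENNReal NNReal

variable {Ω : Type*}

open Function Topology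

lemma Measurable.of_ae_eq_of_null_measurableSet {β : Type*} [MeasurableSpace β]
    {m mΩ : MeasurableSpace Ω} {P : Measure Ω} (hnull : ∀ s, P s = 0 → MeasurableSet[m] s)
    {f g : Ω → β} (hg : Measurable[m] g) (hfg : f =ᵐ[P] g) : Measurable[m] f := by
  intro B hB
  have hN : P {ω | f ω ≠ g ω} = 0 := ae_iff.mp hfg
  have hsplit : f ⁻¹' B = (g ⁻¹' B ∩ {ω | f ω ≠ g ω}ᶜ) ∪ (f ⁻¹' B ∩ {ω | f ω ≠ g ω}) := by
    ext ω; by_cases h : f ω = g ω <;> simp [h]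
  rw [hsplit]
  exact ((hg hB).inter (hnull _ hN).compl).union
    (hnull _ (measure_mono_null inter_subset_right hN))

lemma CondIndepGiven.measureReal_inter_eq_setIntegral_condExp {mΩ : MeasurableSpace Ω}
    {P : Measure Ω} [IsFiniteMeasure P] {m₀ m₁ m₂ : MeasurableSpace Ω}
    (h : CondIndepGiven P m₀ m₁ m₂) (hm₀ : m₀ ≤ mΩ) {G B : Set Ω} (hG₁ : MeasurableSet[m₁] G)
    (hG : MeasurableSet[mΩ] G) (hB₂ : MeasurableSet[m₂] B) (hB : MeasurableSet[mΩ] B) :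
    P.real (G ∩ B) = ∫ ω in G, (P[B.indicator (fun _ => (1 : ℝ)) | m₀]) ω ∂P := by
  set f := P[B.indicator (fun _ => (1 : ℝ)) | m₀]
  have hGf : G.indicator (fun _ => (1 : ℝ)) * f = G.indicator f := by
    ext ω; by_cases hω : ω ∈ G <;> simp [hω]
  have hGf_int : Integrable (G.indicator (fun _ => (1 : ℝ)) * f) P := by
    rw [hGf]; exact integrable_condExp.indicator hG
  have pull_out := condExp_mul_of_stronglyMeasurable_right (m := m₀) stronglyMeasurable_condExp
    hGf_int ((integrable_const (1 : ℝ)).indicator hG)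
  calc P.real (G ∩ B)
      = ∫ ω, (P[(G ∩ B).indicator (fun _ => (1 : ℝ)) | m₀]) ω ∂P := by
        rw [integral_condExp hm₀, integral_indicator (hG.inter hB), setIntegral_const, smul_eq_mul,
          mul_one]
    _ = ∫ ω, (P[G.indicator (fun _ => (1 : ℝ)) * f | m₀]) ω ∂P :=
        integral_congr_ae ((h G B hG₁ hB₂).trans pull_out.symm)
    _ = ∫ ω in G, f ω ∂P := by
        rw [integral_condExp hm₀, hGf, integral_indicator hG]

noncomputable def firstHit (f : ℝ≥0 → ℝ) (c : ℝ) : ℝ≥0∞ :=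
  ⨅ (s : ℝ≥0) (_ : f s ≤ c), (s : ℝ≥0∞)

lemma firstHit_le_iff {f : ℝ≥0 → ℝ} (hf : Continuous f) (hf_anti : Antitone f) {c : ℝ}
    {s : ℝ≥0} : firstHit f c ≤ s ↔ f s ≤ c := by
  refine ⟨fun h => ?_, fun h => iInf₂_le s h⟩
  have h_right : ∀ᶠ r in 𝓝[>] s, f r ≤ c := by
    filter_upwards [self_mem_nhdsWithin] with r (hr : s < r)
    obtain ⟨r', hr'⟩ := iInf_lt_iff.mp (h.trans_lt (ENNReal.coe_lt_coe.mpr hr))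
    obtain ⟨hr'c, hr'r⟩ := iInf_lt_iff.mp hr'
    exact (hf_anti (ENNReal.coe_lt_coe.mp hr'r).le).trans hr'c
  exact le_of_tendsto (hf.continuousWithinAt.tendsto) h_right

lemma apply_firstHit_toNNReal {f : ℝ≥0 → ℝ} (hf : Continuous f) (hf_anti : Antitone f) {c : ℝ}
    (hc : c < f 0) {s : ℝ≥0} (hs : f s ≤ c) : f (firstHit f c).toNNReal = c := by
  obtain ⟨r, hr, hrc⟩ := intermediate_value_Icc' zero_le hf.continuousOn ⟨hs, hc.le⟩
  have h_le_r : firstHit f c ≤ r := iInf₂_le r hrc.le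
  have h_fin : firstHit f c ≠ ∞ := ne_top_of_le_ne_top ENNReal.coe_ne_top h_le_r
  refine le_antisymm ?_ ?_
  · rw [← firstHit_le_iff hf hf_anti, ENNReal.coe_toNNReal h_fin]
  · exact hrc.symm.trans_le
      (hf_anti (by simpa using ENNReal.toNNReal_mono ENNReal.coe_ne_top h_le_r))

lemma NNReal.le_nat_ceil_mul_div (x : ℝ≥0) (n : ℕ) : x ≤ ⌈(n + 1) * x⌉₊ / (n + 1) := by
  rw [le_div_iff₀ (by positivity), mul_comm]
  exact Nat.le_ceil _

lemma NNReal.tendsto_nat_ceil_mul_div (x : ℝ≥0) :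
    Tendsto (fun n : ℕ => (⌈(n + 1) * x⌉₊ : ℝ≥0) / (n + 1)) atTop (𝓝 x) := by
  have h_upper : ∀ n : ℕ, (⌈(n + 1) * x⌉₊ : ℝ≥0) / (n + 1) ≤ x + 1 / (n + 1) := by
    intro n
    rw [div_le_iff₀ (by positivity), add_mul x, one_div_mul_cancel (by positivity), mul_comm x]
    exact (Nat.ceil_lt_add_one zero_le).le
  have h_lim : Tendsto (fun n : ℕ => x + 1 / ((n : ℝ≥0) + 1)) atTop (𝓝 x) := by
    simpa using tendsto_const_nhds.add (tendsto_one_div_add_atTop_nhds_zero_nat (𝕜 := ℝ≥0))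
  exact tendsto_of_tendsto_of_tendsto_of_le_of_le tendsto_const_nhds h_lim
    (NNReal.le_nat_ceil_mul_div x) h_upper

lemma Measurable.eval_process_of_continuous {mΩ : MeasurableSpace Ω} {Z : ℝ≥0 → Ω → ℝ}
    (hZ_meas : ∀ s, Measurable (Z s)) (hZ_cont : ∀ ω, Continuous fun s => Z s ω)
    {σ : Ω → ℝ≥0} (hσ : Measurable σ) : Measurable fun ω => Z (σ ω) ω :=
  (stronglyMeasurable_uncurry_of_continuous_of_stronglyMeasurable hZ_cont
    fun s => (hZ_meas s).stronglyMeasurable).measurable.comp (hσ.prodMk measurable_id)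

section RandomTime

variable {m mΩ : MeasurableSpace Ω} {P : Measure Ω} {τ : Ω → ℝ≥0∞} {Z : ℝ≥0 → Ω → ℝ}

lemma measure_inter_lt_eq_setLIntegral_of_nat (hm : m ≤ mΩ) (hτ : Measurable[mΩ] τ)
    (hZ : ∀ (s : ℝ≥0) (G : Set Ω), MeasurableSet[m] G →
      P (G ∩ {ω | (s : ℝ≥0∞) < τ ω}) = ∫⁻ ω in G, ENNReal.ofReal (Z s ω) ∂P)
    {d : Ω → ℕ} (hd : Measurable[m] d) (v : ℕ → ℝ≥0) {G : Set Ω} (hG : MeasurableSet[m] G) :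
    P (G ∩ {ω | (v (d ω) : ℝ≥0∞) < τ ω}) = ∫⁻ ω in G, ENNReal.ofReal (Z (v (d ω)) ω) ∂P := by
  set G' : ℕ → Set Ω := fun k => G ∩ d ⁻¹' {k}
  have hG'_meas : ∀ k, MeasurableSet[m] (G' k) := fun k => hG.inter (hd (measurableSet_singleton k))
  have hG'_disj : Pairwise (Disjoint on G') := fun k l hkl =>
    ((disjoint_singleton.mpr hkl).preimage d).mono inter_subset_right inter_subset_right
  have hG_eq : G = ⋃ k, G' k := by ext ω; simp [G']
  calc P (G ∩ {ω | (v (d ω) : ℝ≥0∞) < τ ω})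
      = P (⋃ k, G' k ∩ {ω | (v k : ℝ≥0∞) < τ ω}) := by
        congr 1; ext ω; simp [G']
    _ = ∑' k, P (G' k ∩ {ω | (v k : ℝ≥0∞) < τ ω}) :=
        measure_iUnion (hG'_disj.mono fun k l h => h.mono inter_subset_left inter_subset_left)
          fun k => (hm _ (hG'_meas k)).inter (hτ measurableSet_Ioi)
    _ = ∑' k, ∫⁻ ω in G' k, ENNReal.ofReal (Z (v (d ω)) ω) ∂P := by
        refine tsum_congr fun k => ?_
        rw [hZ _ _ (hG'_meas k)]
        refine setLIntegral_congr_fun (hm _ (hG'_meas k)) fun ω hω => ?_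
        rw [show d ω = k from hω.2]
    _ = ∫⁻ ω in G, ENNReal.ofReal (Z (v (d ω)) ω) ∂P := by
        rw [← lintegral_iUnion (fun k => hm _ (hG'_meas k)) hG'_disj, ← hG_eq]

lemma measure_inter_lt_eq_setLIntegral [IsFiniteMeasure P] (hm : m ≤ mΩ)
    (hτ : Measurable[mΩ] τ) (hZ_meas : ∀ s, Measurable[mΩ] (Z s))
    (hZ_cont : ∀ ω, Continuous fun s => Z s ω) (hZ_le : ∀ s ω, Z s ω ≤ 1)
    (hZ : ∀ (s : ℝ≥0) (G : Set Ω), MeasurableSet[m] G →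
      P (G ∩ {ω | (s : ℝ≥0∞) < τ ω}) = ∫⁻ ω in G, ENNReal.ofReal (Z s ω) ∂P)
    {σ : Ω → ℝ≥0} (hσ : Measurable[m] σ) {G : Set Ω} (hG : MeasurableSet[m] G) :
    P (G ∩ {ω | (σ ω : ℝ≥0∞) < τ ω}) = ∫⁻ ω in G, ENNReal.ofReal (Z (σ ω) ω) ∂P := by
  set d : ℕ → Ω → ℕ := fun n ω => ⌈(n + 1) * σ ω⌉₊
  set σ' : ℕ → Ω → ℝ≥0 := fun n ω => d n ω / (n + 1)
  have hd_meas : ∀ n, Measurable[m] (d n) := fun n =>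
    (Nat.measurable_ceil.comp (measurable_id.const_mul _)).comp hσ
  have hσ'_meas : ∀ n, Measurable[mΩ] (σ' n) := fun n =>
    (measurable_from_nat (f := fun k : ℕ => (k : ℝ≥0) / (n + 1))).comp ((hd_meas n).mono hm le_rfl)
  have h_approx : ∀ n, P (G ∩ {ω | (σ' n ω : ℝ≥0∞) < τ ω}) =
      ∫⁻ ω in G, ENNReal.ofReal (Z (σ' n ω) ω) ∂P := fun n =>
    measure_inter_lt_eq_setLIntegral_of_nat hm hτ hZ (hd_meas n) (fun k => k / (n + 1)) hG
  have h_lhs : Tendsto (fun n => P (G ∩ {ω | (σ' n ω : ℝ≥0∞) < τ ω})) atTop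
      (𝓝 (P (G ∩ {ω | (σ ω : ℝ≥0∞) < τ ω}))) := by
    refine tendsto_measure_of_tendsto_indicator_of_isFiniteMeasure _ P
      (fun n => (hm _ hG).inter (measurableSet_lt (hσ'_meas n).coe_nnreal_ennreal hτ))
      fun ω => ?_
    by_cases hω : (σ ω : ℝ≥0∞) < τ ω
    · have h_lim := ENNReal.tendsto_coe.mpr (NNReal.tendsto_nat_ceil_mul_div (σ ω))
      filter_upwards [h_lim.eventually_lt_const hω] with n hn
      exact and_congr_right fun _ => iff_of_true hn hω
    · refine Eventually.of_forall fun n => ?_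
      have h_not : ¬ ((σ' n ω : ℝ≥0∞) < τ ω) := fun h =>
        hω ((ENNReal.coe_le_coe.mpr (NNReal.le_nat_ceil_mul_div (σ ω) n)).trans_lt h)
      exact and_congr_right fun _ => iff_of_false h_not hω
  have h_rhs : Tendsto (fun n => ∫⁻ ω in G, ENNReal.ofReal (Z (σ' n ω) ω) ∂P) atTop
      (𝓝 (∫⁻ ω in G, ENNReal.ofReal (Z (σ ω) ω) ∂P)) := by
    refine tendsto_lintegral_of_dominated_convergence (fun _ => 1)
      (fun n => (Measurable.eval_process_of_continuous hZ_meas hZ_cont (hσ'_meas n)).ennreal_ofReal)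
      (fun n => ae_of_all _ fun ω => ENNReal.ofReal_le_one.mpr (hZ_le _ _))
      (by simp) (ae_of_all _ fun ω => ?_)
    exact ENNReal.tendsto_ofReal
      (((hZ_cont ω).tendsto _).comp (NNReal.tendsto_nat_ceil_mul_div (σ ω)))
  simp only [h_approx] at h_lhs
  exact tendsto_nhds_unique h_lhs h_rhs

end RandomTime

lemma setOf_le_exp_neg_eq_Iic {x : ℝ} (hx : 0 < x) :
    {u : ℝ | x ≤ Real.exp (-u)} = Iic (-Real.log x) := by
  ext u
  exact (Real.log_le_iff_le_exp hx).symm.trans le_neg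

lemma setLIntegral_Ioi_indicator_le_exp_neg {x : ℝ} (hx : 0 < x) :
    ∫⁻ u in Ioi 0, {u : ℝ | x ≤ Real.exp (-u)}.indicator 1 u = ENNReal.ofReal (-Real.log x) := by
  rw [setOf_le_exp_neg_eq_Iic hx, lintegral_indicator_one measurableSet_Iic,
    Measure.restrict_apply measurableSet_Iic, Iic_inter_Ioi, Real.volume_Ioc, sub_zero]

lemma setLIntegral_Ioi_indicator_exp_neg {y : ℝ} (hy₀ : 0 ≤ y) (hy₁ : y ≤ 1) :
    ∫⁻ u in Ioi 0, {u : ℝ | y ≤ Real.exp (-u)}.indicator (fun u => ENNReal.ofReal (Real.exp (-u))) u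
      = ENNReal.ofReal (1 - y) := by
  have h_int : IntegrableOn (fun u : ℝ => Real.exp (-u)) (Ioi 0) := by
    simpa using exp_neg_integrableOn_Ioi 0 one_pos
  have h_nonneg : ∀ u, 0 ≤ Real.exp (-u) := fun u => (Real.exp_pos _).le
  rcases hy₀.eq_or_lt with rfl | hy
  · have h_univ : {u : ℝ | 0 ≤ Real.exp (-u)} = univ := eq_univ_of_forall h_nonneg
    rw [h_univ, indicator_univ, ← ofReal_integral_eq_lintegral_ofReal h_int
      (ae_of_all _ h_nonneg), integral_exp_neg_Ioi_zero, sub_zero]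
  · have h_log : 0 ≤ -Real.log y := neg_nonneg.mpr (Real.log_nonpos hy.le hy₁)
    rw [setOf_le_exp_neg_eq_Iic hy, lintegral_indicator measurableSet_Iic,
      Measure.restrict_restrict measurableSet_Iic, Iic_inter_Ioi,
      ← ofReal_integral_eq_lintegral_ofReal (h_int.mono_set Ioc_subset_Ioi_self)
        (ae_of_all _ h_nonneg),
      ← intervalIntegral.integral_of_le h_log,
      intervalIntegral.integral_comp_neg (fun u => Real.exp u), integral_exp, neg_neg, neg_zero,
      Real.exp_zero, Real.exp_log hy]

lemma lintegral_lintegral_indicator_le {mΩ : MeasurableSpace Ω} {P : Measure Ω} [SFinite P]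
    {ν : Measure ℝ} [SFinite ν] {X : Ω → ℝ} (hX : Measurable X) {φ : ℝ → ℝ} (hφ : Measurable φ)
    {g : ℝ → ℝ≥0∞} (hg : Measurable g) :
    ∫⁻ ω, ∫⁻ u, {u | X ω ≤ φ u}.indicator g u ∂ν ∂P = ∫⁻ u, g u * P {ω | X ω ≤ φ u} ∂ν := by
  have h_meas : MeasurableSet {p : Ω × ℝ | X p.1 ≤ φ p.2} :=
    measurableSet_le (hX.comp measurable_fst) (hφ.comp measurable_snd)
  have h_swap := lintegral_lintegral_swap (μ := P) (ν := ν)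
    (f := fun ω u => {u | X ω ≤ φ u}.indicator g u)
    ((hg.comp measurable_snd).indicator h_meas).aemeasurable
  rw [h_swap]
  refine lintegral_congr fun u => ?_
  rw [← lintegral_indicator_const (measurableSet_le hX measurable_const)]
  rfl

lemma lintegral_ofReal_neg_log_eq_lintegral_ofReal_one_sub {mΩ : MeasurableSpace Ω}
    {P : Measure Ω} [SFinite P] {X Y : Ω → ℝ} (hX : Measurable X) (hY : Measurable Y)
    (hX_pos : ∀ᵐ ω ∂P, 0 < X ω) (hY_nonneg : ∀ᵐ ω ∂P, 0 ≤ Y ω) (hY_le : ∀ᵐ ω ∂P, Y ω ≤ 1)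
    (h : ∀ c, 0 < c → c < 1 → P {ω | X ω ≤ c} = ENNReal.ofReal c * P {ω | Y ω ≤ c}) :
    ∫⁻ ω, ENNReal.ofReal (-Real.log (X ω)) ∂P = ∫⁻ ω, ENNReal.ofReal (1 - Y ω) ∂P := by
  have h_exp : Measurable fun u : ℝ => Real.exp (-u) := by fun_prop
  calc ∫⁻ ω, ENNReal.ofReal (-Real.log (X ω)) ∂P
      = ∫⁻ ω, (∫⁻ u in Ioi 0, {u | X ω ≤ Real.exp (-u)}.indicator 1 u) ∂P :=
        lintegral_congr_ae <| hX_pos.mono fun ω hω =>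
          (setLIntegral_Ioi_indicator_le_exp_neg hω).symm
    _ = ∫⁻ u in Ioi 0, 1 * P {ω | X ω ≤ Real.exp (-u)} :=
        lintegral_lintegral_indicator_le hX h_exp measurable_one
    _ = ∫⁻ u in Ioi 0, ENNReal.ofReal (Real.exp (-u)) * P {ω | Y ω ≤ Real.exp (-u)} :=
        setLIntegral_congr_fun measurableSet_Ioi fun u hu => by
          rw [one_mul, h _ (Real.exp_pos _) (Real.exp_lt_one_iff.mpr (neg_lt_zero.mpr hu))]
    _ = ∫⁻ ω, (∫⁻ u in Ioi 0,
          {u | Y ω ≤ Real.exp (-u)}.indicator (fun u => ENNReal.ofReal (Real.exp (-u))) u) ∂P :=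
        (lintegral_lintegral_indicator_le hY h_exp h_exp.ennreal_ofReal).symm
    _ = ∫⁻ ω, ENNReal.ofReal (1 - Y ω) ∂P :=
        lintegral_congr_ae <| (hY_nonneg.and hY_le).mono fun ω hω =>
          setLIntegral_Ioi_indicator_exp_neg hω.1 hω.2

lemma integrable_and_integral_eq_of_lintegral_ofReal_eq {mΩ : MeasurableSpace Ω}
    {P : Measure Ω} {f : Ω → ℝ} (hf : AEStronglyMeasurable f P) (hf_nonneg : 0 ≤ᵐ[P] f)
    {r : ℝ} (hr : 0 ≤ r) (h : ∫⁻ ω, ENNReal.ofReal (f ω) ∂P = ENNReal.ofReal r) :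
    Integrable f P ∧ ∫ ω, f ω ∂P = r :=
  ⟨⟨hf, by rw [hasFiniteIntegral_iff_ofReal hf_nonneg, h]; exact ENNReal.ofReal_lt_top⟩,
    by rw [integral_eq_lintegral_of_nonneg_ae hf_nonneg hf, h, ENNReal.toReal_ofReal hr]⟩

lemma measurableSet_natFiltDefault_le (τ : Ω → ℝ≥0∞) (s : ℝ≥0) :
    MeasurableSet[natFiltDefault τ s] {ω | τ ω ≤ s} := by
  have h_preimage : defaultProcess τ s ⁻¹' {1} = {ω | τ ω ≤ s} := by
    ext ω; by_cases h : τ ω ≤ s <;> simp [defaultProcess, h]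
  refine le_iSup₂ (f := fun r (_ : r ∈ Iic s) =>
    MeasurableSpace.comap (defaultProcess τ r) (inferInstance : MeasurableSpace ℝ)) s
    (mem_Iic.mpr le_rfl) _ ?_
  exact ⟨{1}, measurableSet_singleton 1, h_preimage⟩

def IsAzemaSupermartingale {mΩ : MeasurableSpace Ω} (P : Measure Ω) (F : Filtration ℝ≥0 mΩ)
    (τ : Ω → ℝ≥0∞) (A : ℝ≥0 → Ω → ℝ) : Prop :=
  ∀ t : ℝ≥0, A t =ᵐ[P] P[Set.indicator {ω | (t : ℝ≥0∞) < τ ω} (fun _ => (1 : ℝ)) | F t]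

namespace IsAzemaSupermartingale

variable {mΩ : MeasurableSpace Ω} {P : Measure Ω} {F : Filtration ℝ≥0 mΩ} {τ : Ω → ℝ≥0∞}
  {A : ℝ≥0 → Ω → ℝ}

lemma integrable (hA : IsAzemaSupermartingale P F τ A) (t : ℝ≥0) : Integrable (A t) P :=
  integrable_condExp.congr (hA t).symm

lemma nonneg (hA : IsAzemaSupermartingale P F τ A) (t : ℝ≥0) : 0 ≤ᵐ[P] A t :=
  (condExp_nonneg (ae_of_all _ fun _ => indicator_nonneg (fun _ _ => zero_le_one) _)).trans
    (hA t).symm.le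

lemma measurable (hA : IsAzemaSupermartingale P F τ A)
    (hF_complete : ∀ (t : ℝ≥0) (s : Set Ω), P s = 0 → MeasurableSet[F t] s) (t : ℝ≥0) :
    Measurable[F t] (A t) :=
  Measurable.of_ae_eq_of_null_measurableSet (hF_complete t) stronglyMeasurable_condExp.measurable
    (hA t)

lemma integral_eq [IsFiniteMeasure P] (hA : IsAzemaSupermartingale P F τ A) (hτ : Measurable τ)
    (t : ℝ≥0) : ∫ ω, A t ω ∂P = P.real {ω | (t : ℝ≥0∞) < τ ω} := by
  rw [integral_congr_ae (hA t), integral_condExp (F.le t),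
    integral_indicator (measurableSet_lt measurable_const hτ), setIntegral_const, smul_eq_mul,
    mul_one]

lemma measure_inter_lt [IsFiniteMeasure P] (hA : IsAzemaSupermartingale P F τ A)
    (hτ : Measurable τ) (hH : HypothesisH P F τ) (s : ℝ≥0) {G : Set Ω}
    (hG : MeasurableSet[⨆ r, F r] G) :
    P (G ∩ {ω | (s : ℝ≥0∞) < τ ω}) = ∫⁻ ω in G, ENNReal.ofReal (A s ω) ∂P := by
  have hB : MeasurableSet[enlTilde F τ s] {ω | (s : ℝ≥0∞) < τ ω} := by
    have h_compl : {ω | (s : ℝ≥0∞) < τ ω} = {ω | τ ω ≤ s}ᶜ := by ext; simp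
    rw [h_compl]
    exact le_sup_right (a := F s) _ (measurableSet_natFiltDefault_le τ s).compl
  have hG_meas : MeasurableSet G := iSup_le (fun r => F.le r) _ hG
  have h_real := (hH s).measureReal_inter_eq_setIntegral_condExp (F.le s) hG hG_meas hB
    (hτ measurableSet_Ioi)
  rw [setIntegral_congr_ae hG_meas ((hA s).mono fun ω h _ => h.symm)] at h_real
  rw [← ofReal_measureReal, h_real,
    ofReal_integral_eq_lintegral_ofReal (hA.integrable s).integrableOn
      (ae_restrict_of_ae (hA.nonneg s))]

lemma measure_stopped_le [IsFiniteMeasure P] (hA : IsAzemaSupermartingale P F τ A)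
    (hF_complete : ∀ (t : ℝ≥0) (s : Set Ω), P s = 0 → MeasurableSet[F t] s)
    (hτ : Measurable τ) (hypA : HypothesisA P F τ) (hypH : HypothesisH P F τ)
    (hA_cont : ∀ ω, Continuous fun s => A s ω) (hA_anti : ∀ ω, Antitone fun s => A s ω)
    (hA_zero : ∀ ω, A 0 ω = 1) (t : ℝ≥0) {c : ℝ} (hc : c < 1) :
    P {ω | A (min (t : ℝ≥0∞) (τ ω)).toNNReal ω ≤ c} = ENNReal.ofReal c * P {ω | A t ω ≤ c} := by
  have hA_meas := hA.measurable hF_complete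
  have hF_le : ∀ s, F s ≤ ⨆ r, F r := le_iSup (fun r => F r)
  set σ : Ω → ℝ≥0∞ := fun ω => firstHit (A · ω) c
  have hσ_le : ∀ ω (s : ℝ≥0), σ ω ≤ s ↔ A s ω ≤ c := fun ω _ =>
    firstHit_le_iff (hA_cont ω) (hA_anti ω)
  have hσ_stop : ∀ s : ℝ≥0, MeasurableSet[F s] {ω | σ ω ≤ s} := fun s => by
    simp_rw [hσ_le]; exact hA_meas s measurableSet_Iic
  have hσ_meas : Measurable[⨆ r, F r] σ := by
    refine measurable_of_Iic fun x => ?_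
    induction x using ENNReal.recTopCoe with
    | top => simp
    | coe s => exact hF_le s _ (hσ_stop s)
  set G := {ω | A t ω ≤ c}
  have hG : MeasurableSet[⨆ r, F r] G := hF_le t _ (hA_meas t measurableSet_Iic)
  have hσ_ne_top : ∀ ω ∈ G, σ ω ≠ ∞ := fun ω hω =>
    ne_top_of_le_ne_top ENNReal.coe_ne_top ((hσ_le ω t).mpr hω)
  calc P {ω | A (min (t : ℝ≥0∞) (τ ω)).toNNReal ω ≤ c}
      = P (G ∩ {ω | σ ω ≤ τ ω}) := by
        congr 1; ext ω
        change A _ ω ≤ c ↔ A t ω ≤ c ∧ σ ω ≤ τ ω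
        rw [← hσ_le, ENNReal.coe_toNNReal (by simp), le_min_iff, hσ_le]
    _ = P (G ∩ {ω | σ ω < τ ω}) := by
        rw [← measure_sdiff_null (hypA σ hσ_stop)]
        congr 1; ext ω
        change (A t ω ≤ c ∧ σ ω ≤ τ ω) ∧ ¬(τ ω = σ ω ∧ σ ω ≠ ∞) ↔ A t ω ≤ c ∧ σ ω < τ ω
        constructor
        · rintro ⟨⟨hω, h_le⟩, h_ne⟩
          exact ⟨hω, h_le.lt_of_ne fun h => h_ne ⟨h.symm, hσ_ne_top ω hω⟩⟩
        · rintro ⟨hω, h_lt⟩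
          exact ⟨⟨hω, h_lt.le⟩, fun h => h_lt.ne h.1.symm⟩
    _ = P (G ∩ {ω | ((σ ω).toNNReal : ℝ≥0∞) < τ ω}) := by
        congr 1; ext ω
        exact and_congr_right fun hω => by simp [ENNReal.coe_toNNReal (hσ_ne_top ω hω)]
    _ = ∫⁻ ω in G, ENNReal.ofReal (A (σ ω).toNNReal ω) ∂P :=
        measure_inter_lt_eq_setLIntegral (iSup_le F.le) hτ
          (fun s => (hA_meas s).mono (F.le s) le_rfl) hA_cont
          (fun s ω => hA_zero ω ▸ hA_anti ω zero_le) (fun s _ => hA.measure_inter_lt hτ hypH s)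
          hσ_meas.ennreal_toNNReal hG
    _ = ∫⁻ _ in G, ENNReal.ofReal c ∂P :=
        setLIntegral_congr_fun (iSup_le F.le _ hG) fun ω hω => by
          rw [apply_firstHit_toNNReal (hA_cont ω) (hA_anti ω) (hA_zero ω ▸ hc) hω]
    _ = ENNReal.ofReal c * P G := setLIntegral_const _ _

end IsAzemaSupermartingale

theorem expectation_neg_log_azema_eq_default_probability_general
    {mΩ : MeasurableSpace Ω} (P : Measure Ω) [IsProbabilityMeasure P]
    (F : MeasureTheory.Filtration ℝ≥0 mΩ)
    (hFcomplete : ∀ (t : ℝ≥0) (s : Set Ω), P s = 0 → MeasurableSet[F t] s)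
    (τ : Ω → ℝ≥0∞) (hτmeas : Measurable τ)
    (hypA : HypothesisA P F τ) (hypH : HypothesisH P F τ)
    (A : ℝ≥0 → Ω → ℝ)
    (hAver : ∀ t : ℝ≥0,
      A t =ᵐ[P] P[Set.indicator {ω | (t : ℝ≥0∞) < τ ω} (fun _ => (1 : ℝ)) | F t])
    (hAcont : ∀ ω, Continuous fun s : ℝ≥0 => A s ω)
    (hAmono : ∀ ω, Antitone fun s : ℝ≥0 => A s ω)
    (hA0 : ∀ ω, A 0 ω = 1)
    (hApos : ∀ᵐ ω ∂P, ∀ t : ℝ≥0, (t : ℝ≥0∞) ≤ τ ω → 0 < A t ω)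
    (t : ℝ≥0) :
    Integrable (fun ω => - Real.log (A (min (t : ℝ≥0∞) (τ ω)).toNNReal ω)) P ∧
    ∫ ω, - Real.log (A (min (t : ℝ≥0∞) (τ ω)).toNNReal ω) ∂P =
      (P {ω | τ ω ≤ (t : ℝ≥0∞)}).toReal := by
  have hA : IsAzemaSupermartingale P F τ A := hAver
  have hA_meas : ∀ s, Measurable (A s) := fun s =>
    (hA.measurable hFcomplete s).mono (F.le s) le_rfl
  have hA_le_one : ∀ s ω, A s ω ≤ 1 := fun s ω => hA0 ω ▸ hAmono ω zero_le
  set X : Ω → ℝ := fun ω => A (min (t : ℝ≥0∞) (τ ω)).toNNReal ω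
  have hX_meas : Measurable X := Measurable.eval_process_of_continuous hA_meas hAcont
    (measurable_const.min hτmeas).ennreal_toNNReal
  have hX_pos : ∀ᵐ ω ∂P, 0 < X ω := hApos.mono fun ω h => h _ <| by
    rw [ENNReal.coe_toNNReal (by simp)]; exact min_le_right _ _
  have h_one_sub : ∫ ω, (1 - A t ω) ∂P = P.real {ω | τ ω ≤ (t : ℝ≥0∞)} := by
    rw [integral_sub (integrable_const 1) (hA.integrable t), hA.integral_eq hτmeas, integral_const,
      probReal_univ, one_smul,
      ← probReal_compl_eq_one_sub (measurableSet_lt measurable_const hτmeas)]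
    congr 1; ext; simp
  refine integrable_and_integral_eq_of_lintegral_ofReal_eq (f := fun ω => -Real.log (X ω))
    hX_meas.log.neg.aestronglyMeasurable
    (hX_pos.mono fun ω h => neg_nonneg.mpr (Real.log_nonpos h.le (hA_le_one _ ω)))
    measureReal_nonneg ?_
  rw [lintegral_ofReal_neg_log_eq_lintegral_ofReal_one_sub hX_meas (hA_meas t) hX_pos
      (hA.nonneg t) (ae_of_all _ (hA_le_one t))
      fun c _ hc => hA.measure_stopped_le hFcomplete hτmeas hypA hypH hAcont hAmono hA0 t hc,
    ← ofReal_integral_eq_lintegral_ofReal (f := fun ω => 1 - A t ω)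
      ((integrable_const 1).sub (hA.integrable t))
      (ae_of_all _ fun ω => sub_nonneg.mpr (hA_le_one t ω)), h_one_sub, measureReal_def]

/-- Under hypotheses (A) and (H), with `A` a continuous nonincreasing version
of the Azéma supermartingale, `A_0 = 1`, a.s. positive on `[0, τ]`, for every `t ≥ 0` the random
variable `-log A_{t ∧ τ}` is integrable and `E[-log A_{t ∧ τ}] = P[τ ≤ t]`. -/
theorem expectation_neg_log_azema_eq_default_probability
    {mΩ : MeasurableSpace Ω} (P : Measure Ω) [IsProbabilityMeasure P]
    (F : MeasureTheory.Filtration ℝ≥0 mΩ)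
    (hFrc : ∀ t : ℝ≥0, F t = ⨅ (ε : ℝ≥0) (_ : 0 < ε), F (t + ε))
    (hFcomplete : ∀ (t : ℝ≥0) (s : Set Ω), P s = 0 → MeasurableSet[F t] s)
    (τ : Ω → ℝ≥0∞) (hτmeas : Measurable τ) (hτpos : ∀ ω, 0 < τ ω)
    (hypA : HypothesisA P F τ) (hypH : HypothesisH P F τ)
    (A : ℝ≥0 → Ω → ℝ)
    (hAver : ∀ t : ℝ≥0,
      A t =ᵐ[P] P[Set.indicator {ω | (t : ℝ≥0∞) < τ ω} (fun _ => (1 : ℝ)) | F t])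
    (hAcont : ∀ ω, Continuous fun s : ℝ≥0 => A s ω)
    (hAmono : ∀ ω, Antitone fun s : ℝ≥0 => A s ω)
    (hA0 : ∀ ω, A 0 ω = 1)
    (hApos : ∀ᵐ ω ∂P, ∀ t : ℝ≥0, (t : ℝ≥0∞) ≤ τ ω → 0 < A t ω)
    (t : ℝ≥0) :
    Integrable (fun ω => - Real.log (A (min (t : ℝ≥0∞) (τ ω)).toNNReal ω)) P ∧
    ∫ ω, - Real.log (A (min (t : ℝ≥0∞) (τ ω)).toNNReal ω) ∂P =
      (P {ω | τ ω ≤ (t : ℝ≥0∞)}).toReal :=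
  expectation_neg_log_azema_eq_default_probability_general P F hFcomplete τ hτmeas hypA hypH A hAver
    hAcont hAmono hA0 hApos t
end
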